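/- Let Γ be a defining graph with vertex set V, and let S₁, S₂ ⊆ V with S₁ ∪ S₂ = V be such that every edge of Γ has both endpoints in S₁ or both endpoints in S₂. Let Γ₁, Γ₂, Γ₀ be the induced labeled subgraphs on S₁, S₂ and S₁ ∩ S₂ respectively. Then A_Γ is the amalgamated free product A_{Γ₁} *_{A_{Γ₀}} A_{Γ₂}: the canonical group homomorphism from the pushout (Mathlib's PushoutI) of the canonical maps A_{Γ₀} → A_{Γ₁} and A_{Γ₀} → A_{Γ₂} to A_Γ, induced by the canonical maps A_{Γ₁} → A_Γ and A_{Γ₂} → A_Γ sending standard generators to standard generators, is a group isomorphism. -/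

import Mathlib

/-! The argument works for any cover of the vertices by pieces `S i` that contain `S₀`, meet
pairwise inside `S₀`, and contain every edge between their vertices. The inverse of the
canonical map sends a vertex `v` to its generator in the factor of any piece containing `v`.
This is well defined because a vertex lying in two pieces lies in `S₀`, where the two
generators are amalgamated, and it respects the Artin relations because every edge lies inside
a single piece, where its relation already holds. Both composites fix the generators. -/
/-- The alternating product `a * b * a * ⋯` with `n` factors. -/
def altProd {M : Type*} [Monoid M] : M → M → ℕ → M
  | _, _, 0 => 1
  | a, b, n + 1 => a * altProd b a n

lemma map_altProd {M N : Type*} [Monoid M] [Monoid N] (φ : M →* N) (a b : M) (n : ℕ) :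
    φ (altProd a b n) = altProd (φ a) (φ b) n := by
  induction n generalizing a b with
  | zero => simp [altProd]
  | succ n ih => simp [altProd, ih]

/-- A defining graph: a finite simplicial graph with each edge labelled by a natural
number `≥ 2`. -/
structure DefiningGraph (V : Type*) where
  graph : SimpleGraph V
  label : V → V → ℕ
  label_symm : ∀ a b, label a b = label b a
  two_le_label : ∀ a b, graph.Adj a b → 2 ≤ label a b

namespace DefiningGraph

variable {V : Type*}

/-- The Artin relations `π(a,b;m_ab) = π(b,a;m_ab)`, one for each edge `{a,b}` of the
defining graph. -/
def rels (Γ : DefiningGraph V) : Set (FreeGroup V) :=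
  {r | ∃ a b, Γ.graph.Adj a b ∧
    r = altProd (FreeGroup.of a) (FreeGroup.of b) (Γ.label a b) *
      (altProd (FreeGroup.of b) (FreeGroup.of a) (Γ.label a b))⁻¹}

end DefiningGraph

/-- The Artin group of a defining graph, as a presented group. -/
abbrev ArtinGroup {V : Type*} (Γ : DefiningGraph V) : Type _ := PresentedGroup Γ.rels

namespace DefiningGraph

variable {V : Type*}

lemma rel_one (Γ : DefiningGraph V) {a b : V} (h : Γ.graph.Adj a b) :
    altProd (PresentedGroup.of a : ArtinGroup Γ) (PresentedGroup.of b) (Γ.label a b) *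
      (altProd (PresentedGroup.of b : ArtinGroup Γ) (PresentedGroup.of a) (Γ.label a b))⁻¹
      = 1 := by
  have key : (PresentedGroup.mk Γ.rels) (altProd (FreeGroup.of a) (FreeGroup.of b) (Γ.label a b) *
      (altProd (FreeGroup.of b) (FreeGroup.of a) (Γ.label a b))⁻¹) = 1 := by
    apply (QuotientGroup.eq_one_iff _).mpr
    exact Subgroup.subset_normalClosure ⟨a, b, h, rfl⟩
  simpa [map_mul, map_inv, map_altProd, PresentedGroup.of] using key

/-- The induced labelled subgraph on a subset `S` of the vertices. -/
def induce (Γ : DefiningGraph V) (S : Set V) : DefiningGraph S where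
  graph := Γ.graph.induce S
  label a b := Γ.label a b
  label_symm a b := Γ.label_symm a b
  two_le_label a b h := Γ.two_le_label a b h

/-- The canonical homomorphism between the Artin groups of nested induced subgraphs,
sending standard generators to standard generators. -/
def induceHom (Γ : DefiningGraph V) {S T : Set V} (hST : S ⊆ T) :
    ArtinGroup (Γ.induce S) →* ArtinGroup (Γ.induce T) :=
  PresentedGroup.toGroup
    (f := fun a : S => (PresentedGroup.of ⟨a.1, hST a.2⟩ : ArtinGroup (Γ.induce T)))
    (by
      rintro r ⟨a, b, hab, rfl⟩
      rw [map_mul, map_inv, map_altProd, map_altProd, FreeGroup.lift_apply_of, FreeGroup.lift_apply_of]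
      exact rel_one (Γ.induce T) (hab : Γ.graph.Adj a.1 b.1))

/-- The canonical homomorphism from the Artin group of an induced subgraph to the ambient
Artin group, sending standard generators to standard generators. -/
def inclHom (Γ : DefiningGraph V) (S : Set V) :
    ArtinGroup (Γ.induce S) →* ArtinGroup Γ :=
  PresentedGroup.toGroup
    (f := fun a : S => (PresentedGroup.of a.1 : ArtinGroup Γ))
    (by
      rintro r ⟨a, b, hab, rfl⟩
      rw [map_mul, map_inv, map_altProd, map_altProd, FreeGroup.lift_apply_of, FreeGroup.lift_apply_of]
      exact rel_one Γ (hab : Γ.graph.Adj a.1 b.1))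

end DefiningGraph

namespace DefiningGraph

variable {V : Type*} (Γ : DefiningGraph V)

@[simp]
lemma inclHom_of (S : Set V) (a : S) : Γ.inclHom S (PresentedGroup.of a) = PresentedGroup.of a.1 :=
  PresentedGroup.toGroup.of _

@[simp]
lemma induceHom_of {S T : Set V} (hST : S ⊆ T) (a : S) :
    Γ.induceHom hST (PresentedGroup.of a) = PresentedGroup.of ⟨a.1, hST a.2⟩ :=
  PresentedGroup.toGroup.of _

lemma inclHom_comp_induceHom {S T : Set V} (hST : S ⊆ T) :
    (Γ.inclHom T).comp (Γ.induceHom hST) = Γ.inclHom S :=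
  PresentedGroup.ext fun a => by simp

lemma lift_rel_eq_one_of_factor {G : Type*} [Group G] {S : Set V}
    (ψ : ArtinGroup (Γ.induce S) →* G) {f : V → G}
    (hf : ∀ a (ha : a ∈ S), f a = ψ (PresentedGroup.of ⟨a, ha⟩))
    {a b : V} (hab : Γ.graph.Adj a b) (ha : a ∈ S) (hb : b ∈ S) :
    FreeGroup.lift f (altProd (FreeGroup.of a) (FreeGroup.of b) (Γ.label a b) *
      (altProd (FreeGroup.of b) (FreeGroup.of a) (Γ.label a b))⁻¹) = 1 := by
  rw [map_mul, map_inv, map_altProd, map_altProd, FreeGroup.lift_apply_of,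
    FreeGroup.lift_apply_of, hf a ha, hf b hb, ← map_altProd, ← map_altProd, ← map_inv,
    ← map_mul]
  exact (congrArg ψ ((Γ.induce S).rel_one (a := ⟨a, ha⟩) (b := ⟨b, hb⟩) hab)).trans ψ.map_one

section Amalgam

open Monoid

variable {ι : Type*} {S₀ : Set V} {S : ι → Set V} (hS₀ : ∀ i, S₀ ⊆ S i)

def amalgamHom : PushoutI (fun i => Γ.induceHom (hS₀ i)) →* ArtinGroup Γ :=
  PushoutI.lift (fun i => Γ.inclHom (S i)) (Γ.inclHom S₀)
    (fun i => Γ.inclHom_comp_induceHom (hS₀ i))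

lemma amalgamHom_of (i : ι) (a : S i) :
    Γ.amalgamHom hS₀ (PushoutI.of i (PresentedGroup.of a)) = PresentedGroup.of a.1 := by
  simp [amalgamHom]

lemma pushoutI_of_of_eq (hinter : Pairwise fun i j => S i ∩ S j ⊆ S₀) {v : V} {i j : ι}
    (hvi : v ∈ S i) (hvj : v ∈ S j) :
    (PushoutI.of i (PresentedGroup.of ⟨v, hvi⟩) : PushoutI fun k => Γ.induceHom (hS₀ k)) =
      PushoutI.of j (PresentedGroup.of ⟨v, hvj⟩) := by
  by_cases hij : i = j
  · subst hij
    rfl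
  · have hv₀ : v ∈ S₀ := hinter hij ⟨hvi, hvj⟩
    have hbase (k : ι) (hvk : v ∈ S k) : PushoutI.of (φ := fun k => Γ.induceHom (hS₀ k)) k
        (PresentedGroup.of ⟨v, hvk⟩) = PushoutI.base _ (PresentedGroup.of ⟨v, hv₀⟩) := by
      rw [← PushoutI.of_apply_eq_base _ k, induceHom_of]
    rw [hbase i hvi, hbase j hvj]

variable (hcover : ∀ v, ∃ i, v ∈ S i)

noncomputable def amalgamGen (v : V) : PushoutI (fun i => Γ.induceHom (hS₀ i)) :=
  PushoutI.of (hcover v).choose (PresentedGroup.of ⟨v, (hcover v).choose_spec⟩)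

lemma amalgamGen_eq (hinter : Pairwise fun i j => S i ∩ S j ⊆ S₀) (v : V) {i : ι}
    (hv : v ∈ S i) : Γ.amalgamGen hS₀ hcover v = PushoutI.of i (PresentedGroup.of ⟨v, hv⟩) :=
  Γ.pushoutI_of_of_eq hS₀ hinter _ hv

variable (hinter : Pairwise fun i j => S i ∩ S j ⊆ S₀)
  (hedges : ∀ a b, Γ.graph.Adj a b → ∃ i, a ∈ S i ∧ b ∈ S i)

noncomputable def amalgamInv : ArtinGroup Γ →* PushoutI (fun i => Γ.induceHom (hS₀ i)) :=
  PresentedGroup.toGroup (f := Γ.amalgamGen hS₀ hcover) <| by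
    rintro r ⟨a, b, hab, rfl⟩
    obtain ⟨i, ha, hb⟩ := hedges a b hab
    exact Γ.lift_rel_eq_one_of_factor (PushoutI.of (φ := fun k => Γ.induceHom (hS₀ k)) i)
      (fun v hv => Γ.amalgamGen_eq hS₀ hcover hinter v hv) hab ha hb

lemma amalgamInv_of (v : V) :
    Γ.amalgamInv hS₀ hcover hinter hedges (PresentedGroup.of v) = Γ.amalgamGen hS₀ hcover v :=
  PresentedGroup.toGroup.of _

lemma amalgamHom_comp_amalgamInv :
    (Γ.amalgamHom hS₀).comp (Γ.amalgamInv hS₀ hcover hinter hedges) = MonoidHom.id _ :=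
  PresentedGroup.ext fun v => by
    obtain ⟨i, hv⟩ := hcover v
    rw [MonoidHom.comp_apply, amalgamInv_of, Γ.amalgamGen_eq hS₀ hcover hinter v hv,
      amalgamHom_of, MonoidHom.id_apply]

lemma amalgamInv_comp_amalgamHom_comp_of (i : ι) :
    ((Γ.amalgamInv hS₀ hcover hinter hedges).comp (Γ.amalgamHom hS₀)).comp (PushoutI.of i) =
      PushoutI.of (φ := fun k => Γ.induceHom (hS₀ k)) i :=
  PresentedGroup.ext fun a => by
    rw [MonoidHom.comp_apply, MonoidHom.comp_apply, amalgamHom_of, amalgamInv_of,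
      Γ.amalgamGen_eq hS₀ hcover hinter a.1 a.2]

lemma amalgamInv_comp_amalgamHom :
    (Γ.amalgamInv hS₀ hcover hinter hedges).comp (Γ.amalgamHom hS₀) = MonoidHom.id _ := by
  refine PushoutI.hom_ext (fun i => ?_) (PresentedGroup.ext fun a => ?_)
  · rw [amalgamInv_comp_amalgamHom_comp_of, MonoidHom.id_comp]
  · obtain ⟨i, -⟩ := hcover a.1
    rw [← PushoutI.of_comp_eq_base i, ← MonoidHom.comp_assoc,
      amalgamInv_comp_amalgamHom_comp_of, MonoidHom.id_comp]

noncomputable def amalgamEquiv : PushoutI (fun i => Γ.induceHom (hS₀ i)) ≃* ArtinGroup Γ :=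
  (Γ.amalgamHom hS₀).toMulEquiv (Γ.amalgamInv hS₀ hcover hinter hedges)
    (Γ.amalgamInv_comp_amalgamHom hS₀ hcover hinter hedges)
    (Γ.amalgamHom_comp_amalgamInv hS₀ hcover hinter hedges)

end Amalgam

end DefiningGraph

/-- **Visual splittings.** If `S₁ ∪ S₂ = V` and every edge of `Γ` has both endpoints in `S₁`
or both endpoints in `S₂`, then `A_Γ` is the amalgamated product `A_{Γ₁} *_{A_{Γ₀}} A_{Γ₂}`,
where `Γ₁, Γ₂, Γ₀` are the induced subgraphs on `S₁`, `S₂` and `S₁ ∩ S₂`: the canonical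
homomorphism from the pushout of `A_{Γ₀} → A_{Γ₁}` and `A_{Γ₀} → A_{Γ₂}` to `A_Γ` is a group
isomorphism. -/
theorem visual_splitting_bijective {V : Type*} (Γ : DefiningGraph V)
    (S₁ S₂ : Set V) (hcover : S₁ ∪ S₂ = Set.univ)
    (hedges : ∀ a b : V, Γ.graph.Adj a b → (a ∈ S₁ ∧ b ∈ S₁) ∨ (a ∈ S₂ ∧ b ∈ S₂)) :
    Function.Bijective
      (Monoid.PushoutI.lift
        (φ := fun i : Bool =>
          Γ.induceHom (S := S₁ ∩ S₂) (T := if i then S₁ else S₂)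
            (by cases i
                · exact Set.inter_subset_right
                · exact Set.inter_subset_left))
        (fun i : Bool => Γ.inclHom (if i then S₁ else S₂))
        (Γ.inclHom (S₁ ∩ S₂))
        (by
          intro i
          ext x
          cases i <;>
            simp [DefiningGraph.induceHom, DefiningGraph.inclHom,
              PresentedGroup.toGroup.of, MonoidHom.comp_apply])) := by
  let S : Bool → Set V := fun i => if i then S₁ else S₂
  have hS₀ : ∀ i, S₁ ∩ S₂ ⊆ S i
    | true => Set.inter_subset_left
    | false => Set.inter_subset_right
  have hinter : Pairwise fun i j => S i ∩ S j ⊆ S₁ ∩ S₂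
    | true, true, h | false, false, h => absurd rfl h
    | true, false, _ => subset_rfl
    | false, true, _ => (Set.inter_comm _ _).subset
  have hcover' (v : V) : ∃ i, v ∈ S i :=
    (hcover ▸ Set.mem_univ v : v ∈ S₁ ∪ S₂).elim (⟨true, ·⟩) (⟨false, ·⟩)
  have hedges' (a b : V) (hab : Γ.graph.Adj a b) : ∃ i, a ∈ S i ∧ b ∈ S i :=
    (hedges a b hab).elim (⟨true, ·⟩) (⟨false, ·⟩)
  exact (Γ.amalgamEquiv hS₀ hcover' hinter hedges').bijective
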